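/- arXiv:1508.05280 — 5 statements merged into one kernel-verified Lean document; each statement's English description precedes it below -/
import Mathlib

section
/- For p ∈ 0⁺(S), the following are equivalent: (a) p ∈ K(0⁺(S)); (b) for every A ∈ p, the set {x ∈ S : −x+A ∈ p} is syndetic near zero; (c) for every r ∈ 0⁺(S) there exists q ∈ 0⁺(S) with p = q + r + p. -/
open Set Filter

attribute [local instance] Ultrafilter.add

/-- `S` is a subsemigroup of `((0,∞),+)` which is dense in `(0,∞)`
    (with the usual topology of `ℝ`). -/
def DenseSubsemigroupPos (S : Set ℝ) : Prop :=
  (∀ x ∈ S, 0 < x) ∧ (∀ x ∈ S, ∀ y ∈ S, x + y ∈ S) ∧ Ioi (0 : ℝ) ⊆ closure S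

/-- `0⁺(S)`: the ultrafilters (on `S`, viewed as ultrafilters on `ℝ` containing `S`)
    all of whose members meet every interval `(0,ε)`. -/
def zeroPlus (S : Set ℝ) : Set (Ultrafilter ℝ) :=
  {p | ∀ ε > (0 : ℝ), Ioo (0 : ℝ) ε ∩ S ∈ p}

/-- `L` is a left ideal of the subsemigroup `T` of `βS_d`. -/
def IsLeftIdealIn (T L : Set (Ultrafilter ℝ)) : Prop :=
  L.Nonempty ∧ L ⊆ T ∧ ∀ p ∈ T, ∀ q ∈ L, p + q ∈ L

/-- `L` is a minimal left ideal of the subsemigroup `T` of `βS_d`. -/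
def IsMinimalLeftIdealIn (T L : Set (Ultrafilter ℝ)) : Prop :=
  IsLeftIdealIn T L ∧ ∀ L', IsLeftIdealIn T L' → L' ⊆ L → L' = L

/-- `K(T)`: the smallest two sided ideal of `T`, i.e. the union of all
    minimal left ideals of `T`. -/
def smallestIdeal (T : Set (Ultrafilter ℝ)) : Set (Ultrafilter ℝ) :=
  ⋃₀ {L | IsMinimalLeftIdealIn T L}

/-- `A` is thick near zero (as a subset of `S`). -/
def ThickNearZero (S A : Set ℝ) : Prop :=
  ∃ ε > (0 : ℝ), ∀ F : Finset ℝ, F.Nonempty → ↑F ⊆ Ioo (0 : ℝ) ε ∩ S →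
    ∀ δ > (0 : ℝ), ∃ y ∈ Ioo (0 : ℝ) δ ∩ S, ∀ x ∈ F, x + y ∈ A

/-- `A` is syndetic near zero (as a subset of `S`). -/
def SyndeticNearZero (S A : Set ℝ) : Prop :=
  ∀ ε > (0 : ℝ), ∃ F : Finset ℝ, F.Nonempty ∧ ↑F ⊆ Ioo (0 : ℝ) ε ∩ S ∧
    ∃ δ > (0 : ℝ), ∀ x ∈ Ioo (0 : ℝ) δ ∩ S, ∃ t ∈ F, t + x ∈ A

/-- `A` is piecewise syndetic near zero (as a subset of `S`). -/
def PiecewiseSyndeticNearZero (S A : Set ℝ) : Prop :=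
  ∀ δ > (0 : ℝ), ∃ F : Finset ℝ, F.Nonempty ∧ ↑F ⊆ Ioo (0 : ℝ) δ ∩ S ∧
    ThickNearZero S {y | y ∈ S ∧ ∃ t ∈ F, t + y ∈ A}

/-- `T_0`: sequences in `S` with infimum `0`. -/
def T0 (S : Set ℝ) : Set (ℕ → ℝ) :=
  {f | (∀ n, f n ∈ S) ∧ IsGLB (range f) 0}

/-- `A` is a `J`-set near zero (as a subset of `S`). -/
def JSetNearZero (S A : Set ℝ) : Prop :=
  ∀ F : Finset (ℕ → ℝ), F.Nonempty → ↑F ⊆ T0 S → ∀ δ > (0 : ℝ),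
    ∃ a ∈ S ∩ Ioo (0 : ℝ) δ, ∃ H : Finset ℕ, H.Nonempty ∧
      ∀ f ∈ F, a + ∑ t ∈ H, f t ∈ A

/-- `J_0(S)`: the members of `0⁺(S)` all of whose members are `J`-sets near zero. -/
def J0 (S : Set ℝ) : Set (Ultrafilter ℝ) :=
  {p | p ∈ zeroPlus S ∧ ∀ A : Set ℝ, A ⊆ S → A ∈ p → JSetNearZero S A}

/-- `A` is central near zero: it belongs to some idempotent in `K(0⁺(S))`. -/
def CentralNearZero (S A : Set ℝ) : Prop :=
  ∃ p : Ultrafilter ℝ, p + p = p ∧ p ∈ smallestIdeal (zeroPlus S) ∧ A ∈ p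

/-- `A` is a `C`-set near zero (it satisfies the conclusion of the Central Sets
    Theorem near zero). -/
def CSetNearZero (S A : Set ℝ) : Prop :=
  ∀ δ ∈ Ioo (0 : ℝ) 1,
    ∃ (α : Finset (ℕ → ℝ) → ℝ) (H : Finset (ℕ → ℝ) → Finset ℕ),
      (∀ F : Finset (ℕ → ℝ), F.Nonempty → ↑F ⊆ T0 S →
        α F ∈ S ∧ α F < δ ∧ (H F).Nonempty) ∧
      (∀ F G : Finset (ℕ → ℝ), F.Nonempty → ↑F ⊆ T0 S → G.Nonempty → ↑G ⊆ T0 S →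
        F ⊂ G → ∀ i ∈ H F, ∀ j ∈ H G, i < j) ∧
      (∀ m : ℕ, ∀ G : Fin (m + 1) → Finset (ℕ → ℝ), ∀ f : Fin (m + 1) → ℕ → ℝ,
        (∀ i, (G i).Nonempty) → (∀ i, ↑(G i) ⊆ T0 S) →
        (∀ i j, i < j → G i ⊂ G j) → (∀ i, f i ∈ G i) →
        ∑ i, (α (G i) + ∑ t ∈ H (G i), f i t) ∈ A)

/-!
`0⁺(S)` is a closed subsemigroup of `βS_d`, so it is a compact right topological semigroup and
has minimal left ideals. Since `0⁺(S) + r + p` is a left ideal inside the minimal left ideal of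
`p`, the point `p` lies in a minimal left ideal iff `p ∈ 0⁺(S) + r + p` for every `r ∈ 0⁺(S)`:
this is (a) ⇔ (c).

For (b) ⇒ (c), syndeticity of `{x : -x + A ∈ p}` for every `A ∈ p` gives the sets
`{x : -x + A ∈ r + p}` the finite intersection property near zero, and any `q ∈ 0⁺(S)` containing
them all satisfies `q + r + p = p`. For (a) ⇒ (b), if `B = {x : -x + A ∈ p}` is not syndetic near
zero, its complement carries some `r ∈ 0⁺(S)` with `-a + Bᶜ ∈ r` for all small `a`; writing
`p = q + r + p` then yields `x, y` with `-(x + y) + A ∈ p` although `x + y ∉ B`.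
-/

open Topology

theorem ultrafilter_add_assoc (p q r : Ultrafilter ℝ) : p + q + r = p + (q + r) :=
  @add_assoc _ Ultrafilter.addSemigroup p q r

theorem ultrafilter_mem_add_iff {p q : Ultrafilter ℝ} {A : Set ℝ} :
    A ∈ p + q ↔ {x | {y | x + y ∈ A} ∈ q} ∈ p :=
  Iff.rfl

section LeftIdeals

variable {T L : Set (Ultrafilter ℝ)}

theorem isLeftIdealIn_image_add_right (hT : ∀ p ∈ T, ∀ q ∈ T, p + q ∈ T)
    {q : Ultrafilter ℝ} (hq : q ∈ T) : IsLeftIdealIn T ((· + q) '' T) := by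
  refine ⟨⟨q + q, q, hq, rfl⟩, ?_, ?_⟩
  · rintro _ ⟨x, hx, rfl⟩
    exact hT x hx q hq
  · rintro p hp _ ⟨x, hx, rfl⟩
    exact ⟨p + x, hT p hp x hx, ultrafilter_add_assoc p x q⟩

theorem IsLeftIdealIn.image_add_right_subset (hL : IsLeftIdealIn T L) {q : Ultrafilter ℝ}
    (hq : q ∈ L) : (· + q) '' T ⊆ L := by
  rintro _ ⟨x, hx, rfl⟩
  exact hL.2.2 x hx q hq

theorem IsMinimalLeftIdealIn.image_add_right_eq (hT : ∀ p ∈ T, ∀ q ∈ T, p + q ∈ T)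
    (hL : IsMinimalLeftIdealIn T L) {q : Ultrafilter ℝ} (hq : q ∈ L) : (· + q) '' T = L :=
  hL.2 _ (isLeftIdealIn_image_add_right hT (hL.1.2.1 hq)) (hL.1.image_add_right_subset hq)

theorem IsMinimalLeftIdealIn.image_add_right (hT : ∀ p ∈ T, ∀ q ∈ T, p + q ∈ T)
    (hL : IsMinimalLeftIdealIn T L) {t : Ultrafilter ℝ} (ht : t ∈ T) :
    IsMinimalLeftIdealIn T ((· + t) '' L) := by
  obtain ⟨⟨⟨x₀, hx₀⟩, hLT, hLadd⟩, hLmin⟩ := hL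
  refine ⟨⟨⟨x₀ + t, x₀, hx₀, rfl⟩, ?_, ?_⟩, fun L' hL' hL'sub => ?_⟩
  · rintro _ ⟨x, hx, rfl⟩
    exact hT x (hLT hx) t ht
  · rintro p hp _ ⟨x, hx, rfl⟩
    exact ⟨p + x, hLadd p hp x hx, ultrafilter_add_assoc p x t⟩
  have hB : IsLeftIdealIn T {y ∈ L | y + t ∈ L'} := by
    obtain ⟨_, hyL'⟩ := hL'.1
    obtain ⟨y, hy, rfl⟩ := hL'sub hyL'
    refine ⟨⟨y, hy, hyL'⟩, fun y hy => hLT hy.1, ?_⟩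
    rintro p hp y ⟨hyL, hyL'⟩
    refine ⟨hLadd p hp y hyL, ?_⟩
    rw [ultrafilter_add_assoc]
    exact hL'.2.2 p hp _ hyL'
  have hBL := hLmin _ hB fun y hy => hy.1
  refine hL'sub.antisymm ?_
  rintro _ ⟨x, hx, rfl⟩
  exact (hBL.symm ▸ hx : x ∈ {y ∈ L | y + t ∈ L'}).2

theorem exists_isMinimalLeftIdealIn (hT : ∀ p ∈ T, ∀ q ∈ T, p + q ∈ T) (hTc : IsClosed T)
    (hTne : T.Nonempty) : ∃ L, IsMinimalLeftIdealIn T L := by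
  -- Zorn's lemma on the principal left ideals `T + q`, which are compact.
  set 𝓕 := (fun q => (· + q) '' T) '' T
  have hchain : ∀ c ⊆ 𝓕, IsChain (· ⊆ ·) c → c.Nonempty → ∃ lb ∈ 𝓕, ∀ s ∈ c, lb ⊆ s := by
    intro c hc𝓕 hchain ⟨s₀, hs₀⟩
    have : Nonempty c := ⟨⟨s₀, hs₀⟩⟩
    obtain ⟨q, hq⟩ : (⋂₀ c).Nonempty := by
      refine IsCompact.nonempty_sInter_of_directed_nonempty_isCompact_isClosed
        (fun a ha b hb => (hchain.total ha hb).elim (fun h => ⟨a, ha, le_rfl, h⟩)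
          fun h => ⟨b, hb, h, le_rfl⟩) (fun s hs => ?_) (fun s hs => ?_) fun s hs => ?_ <;>
      obtain ⟨t, ht, rfl⟩ := hc𝓕 hs
      · exact ⟨t + t, t, ht, rfl⟩
      · exact hTc.isCompact.image (Ultrafilter.continuous_add_left t)
      · exact (hTc.isCompact.image (Ultrafilter.continuous_add_left t)).isClosed
    obtain ⟨t, ht, rfl⟩ := hc𝓕 hs₀
    have hqT : q ∈ T := (isLeftIdealIn_image_add_right hT ht).2.1 (hq _ hs₀)
    refine ⟨_, ⟨q, hqT, rfl⟩, fun s hs => ?_⟩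
    obtain ⟨t, ht, rfl⟩ := hc𝓕 hs
    exact (isLeftIdealIn_image_add_right hT ht).image_add_right_subset (hq _ hs)
  obtain ⟨q₀, hq₀⟩ := hTne
  obtain ⟨_, -, ⟨q, hq, rfl⟩, hmin⟩ := zorn_superset_nonempty 𝓕 hchain _ ⟨q₀, hq₀, rfl⟩
  refine ⟨_, isLeftIdealIn_image_add_right hT hq, fun L hL hLsub => ?_⟩
  obtain ⟨s, hs⟩ := hL.1
  have hsub := hL.image_add_right_subset hs
  exact hLsub.antisymm ((hmin ⟨s, hL.2.1 hs, rfl⟩ (hsub.trans hLsub)).trans hsub)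

theorem smallestIdeal_subset : smallestIdeal T ⊆ T := by
  rintro p ⟨L, hL, hpL⟩
  exact hL.1.2.1 hpL

theorem exists_eq_add_add_of_mem_smallestIdeal (hT : ∀ p ∈ T, ∀ q ∈ T, p + q ∈ T)
    {p r : Ultrafilter ℝ} (hp : p ∈ smallestIdeal T) (hr : r ∈ T) :
    ∃ q ∈ T, p = q + r + p := by
  obtain ⟨L, hL, hpL⟩ := hp
  rw [← hL.image_add_right_eq hT (hL.1.2.2 r hr p hpL)] at hpL
  obtain ⟨q, hq, hqp⟩ := hpL
  exact ⟨q, hq, by rw [ultrafilter_add_assoc]; exact hqp.symm⟩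

theorem mem_smallestIdeal_of_forall_exists_eq_add_add (hT : ∀ p ∈ T, ∀ q ∈ T, p + q ∈ T)
    (hTc : IsClosed T) (hTne : T.Nonempty) {p : Ultrafilter ℝ} (hp : p ∈ T)
    (h : ∀ r ∈ T, ∃ q ∈ T, p = q + r + p) : p ∈ smallestIdeal T := by
  obtain ⟨L, hL⟩ := exists_isMinimalLeftIdealIn hT hTc hTne
  obtain ⟨r, hr⟩ := hL.1.1
  obtain ⟨q, hq, hqp⟩ := h r (hL.1.2.1 hr)
  exact ⟨_, hL.image_add_right hT hp, q + r, hL.1.2.2 q hq r hr, hqp.symm⟩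

end LeftIdeals

section ZeroPlus

variable {S : Set ℝ}

theorem Ioo_inter_nonempty_of_Ioi_subset_closure (hS : Ioi (0 : ℝ) ⊆ closure S) {ε : ℝ}
    (hε : 0 < ε) : (Ioo 0 ε ∩ S).Nonempty :=
  mem_closure_iff.1 (hS (half_pos hε)) _ isOpen_Ioo ⟨half_pos hε, half_lt_self hε⟩

theorem self_mem_of_mem_zeroPlus {p : Ultrafilter ℝ} (hp : p ∈ zeroPlus S) : S ∈ p :=
  Filter.mem_of_superset (hp 1 one_pos) inter_subset_right

theorem isClosed_zeroPlus : IsClosed (zeroPlus S) := by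
  have : zeroPlus S = ⋂ ε > (0 : ℝ), {p : Ultrafilter ℝ | Ioo 0 ε ∩ S ∈ p} := by
    ext p
    simp only [zeroPlus, mem_iInter]
    rfl
  rw [this]
  exact isClosed_biInter fun ε _ => ultrafilter_isClosed_basic _

theorem add_mem_zeroPlus (hS : ∀ x ∈ S, ∀ y ∈ S, x + y ∈ S) {p q : Ultrafilter ℝ}
    (hp : p ∈ zeroPlus S) (hq : q ∈ zeroPlus S) : p + q ∈ zeroPlus S := by
  intro ε hε
  rw [ultrafilter_mem_add_iff]
  refine Filter.mem_of_superset (hp (ε / 2) (half_pos hε)) fun x ⟨⟨hx0, hxε⟩, hxS⟩ => ?_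
  exact Filter.mem_of_superset (hq (ε / 2) (half_pos hε)) fun y ⟨⟨hy0, hyε⟩, hyS⟩ =>
    ⟨⟨by linarith, by linarith⟩, hS x hxS y hyS⟩

theorem exists_mem_zeroPlus_le {f : Filter ℝ}
    (hf : ∀ A ∈ f, ∀ ε > (0 : ℝ), (Ioo 0 ε ∩ S ∩ A).Nonempty) :
    ∃ u ∈ zeroPlus S, ↑u ≤ f := by
  -- `0⁺(S)` consists of the ultrafilters finer than `𝓝[>] 0 ⊓ 𝓟 S`.
  have : (f ⊓ (𝓝[>] 0 ⊓ 𝓟 S)).NeBot := by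
    refine inf_neBot_iff.2 fun A hA B hB => ?_
    obtain ⟨ε, hε, hεB⟩ := mem_nhdsGT_iff_exists_Ioo_subset.1 (mem_inf_principal.1 hB)
    obtain ⟨x, ⟨hxε, hxS⟩, hxA⟩ := hf A hA ε hε
    exact ⟨x, hxA, hεB hxε hxS⟩
  obtain ⟨u, hu⟩ := Ultrafilter.exists_le (f ⊓ (𝓝[>] 0 ⊓ 𝓟 S))
  refine ⟨u, fun ε hε => ?_, hu.trans inf_le_left⟩
  exact hu.trans inf_le_right (inter_mem_inf (Ioo_mem_nhdsGT hε) (mem_principal_self S))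

theorem zeroPlus_nonempty (hS : Ioi (0 : ℝ) ⊆ closure S) : (zeroPlus S).Nonempty := by
  obtain ⟨u, hu, -⟩ := exists_mem_zeroPlus_le (S := S) (f := ⊤) fun A hA ε hε => by
    simpa [mem_top.1 hA] using Ioo_inter_nonempty_of_Ioi_subset_closure hS hε
  exact ⟨u, hu⟩

theorem exists_mem_zeroPlus_of_not_syndeticNearZero (hS : Ioi (0 : ℝ) ⊆ closure S)
    {C : Set ℝ} (hC : ¬SyndeticNearZero S C) :
    ∃ ε > (0 : ℝ), ∃ r ∈ zeroPlus S, ∀ a ∈ Ioo 0 ε ∩ S, {x | a + x ∉ C} ∈ r := by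
  simp only [SyndeticNearZero, not_forall, not_exists, not_and, exists_prop] at hC
  obtain ⟨ε, hε, hC⟩ := hC
  obtain ⟨a₀, ha₀⟩ := Ioo_inter_nonempty_of_Ioi_subset_closure hS hε
  obtain ⟨r, hr, hrle⟩ := exists_mem_zeroPlus_le
    (f := ⨅ a ∈ Ioo 0 ε ∩ S, 𝓟 {x | a + x ∉ C}) fun X hX δ hδ => by
      classical
      obtain ⟨I, hIfin, hIε, hIX⟩ := mem_biInf_principal.1 hX
      obtain ⟨x, hx, hxC⟩ := hC (insert a₀ hIfin.toFinset) (Finset.insert_nonempty _ _)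
        (by
          rw [Finset.coe_insert, Finite.coe_toFinset]
          exact insert_subset ha₀ hIε) δ hδ
      exact ⟨x, hx, hIX (mem_iInter₂.2 fun a ha => hxC a (by simp [ha]))⟩
  exact ⟨ε, hε, r, hr, fun a ha =>
    hrle (mem_iInf_of_mem a (mem_iInf_of_mem ha (mem_principal_self _)))⟩

theorem exists_mem_zeroPlus_add_eq {p s : Ultrafilter ℝ}
    (h : ∀ A ∈ p, ∀ ε > (0 : ℝ), ∃ x ∈ Ioo 0 ε ∩ S, {y | x + y ∈ A} ∈ s) :
    ∃ q ∈ zeroPlus S, q + s = p := by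
  obtain ⟨q, hq, hqle⟩ := exists_mem_zeroPlus_le
    (f := ⨅ A ∈ p, 𝓟 {x | {y | x + y ∈ A} ∈ s}) fun X hX ε hε => by
      obtain ⟨I, hIfin, hIp, hIX⟩ := mem_biInf_principal.1 hX
      obtain ⟨x, hx, hxs⟩ := h (⋂ A ∈ I, A) ((biInter_mem hIfin).2 hIp) ε hε
      refine ⟨x, hx, hIX (mem_iInter₂.2 fun A hA => mem_of_superset hxs fun y hy => ?_)⟩
      exact mem_iInter₂.1 hy A hA
  exact ⟨q, hq, Ultrafilter.eq_of_le fun A hA =>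
    hqle (mem_iInf_of_mem A (mem_iInf_of_mem hA (mem_principal_self _)))⟩

theorem syndeticNearZero_of_mem_smallestIdeal (hS : DenseSubsemigroupPos S) {p : Ultrafilter ℝ}
    (hp : p ∈ smallestIdeal (zeroPlus S)) {A : Set ℝ} (hA : A ∈ p) :
    SyndeticNearZero S {x | x ∈ S ∧ {y | y ∈ S ∧ x + y ∈ A} ∈ p} := by
  by_contra hB
  obtain ⟨ε, hε, r, hr, hrB⟩ := exists_mem_zeroPlus_of_not_syndeticNearZero hS.2.2 hB
  obtain ⟨q, hq, hqp⟩ := exists_eq_add_add_of_mem_smallestIdeal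
    (fun a ha b hb => add_mem_zeroPlus hS.2.1 ha hb) hp hr
  have hAq : {x | {y | x + y ∈ A} ∈ r + p} ∈ q := by
    rw [← ultrafilter_mem_add_iff, ← ultrafilter_add_assoc, ← hqp]
    exact hA
  obtain ⟨x, ⟨hxε, hxS⟩, hxA⟩ := Ultrafilter.nonempty_of_mem (inter_mem (hq ε hε) hAq)
  rw [Set.mem_ofPred_eq, ultrafilter_mem_add_iff] at hxA
  obtain ⟨y, ⟨hyS, hyB⟩, hyA⟩ := Ultrafilter.nonempty_of_mem
    (inter_mem (inter_mem (self_mem_of_mem_zeroPlus hr) (hrB x ⟨hxε, hxS⟩)) hxA)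
  have hxyA : {z | x + y + z ∈ A} ∈ p := by
    simpa only [add_assoc] using show {z | x + (y + z) ∈ A} ∈ p from hyA
  exact hyB ⟨hS.2.1 x hxS y hyS,
    inter_mem (self_mem_of_mem_zeroPlus (smallestIdeal_subset hp)) hxyA⟩

theorem exists_eq_add_add_of_forall_syndeticNearZero {p : Ultrafilter ℝ} (hp : p ∈ zeroPlus S)
    (hsyn : ∀ A ⊆ S, A ∈ p → SyndeticNearZero S {x | x ∈ S ∧ {y | y ∈ S ∧ x + y ∈ A} ∈ p})
    {r : Ultrafilter ℝ} (hr : r ∈ zeroPlus S) : ∃ q ∈ zeroPlus S, p = q + r + p := by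
  obtain ⟨q, hq, hqp⟩ := exists_mem_zeroPlus_add_eq (s := r + p) fun A hA ε hε => by
    obtain ⟨F, -, hFε, δ, hδ, hcov⟩ := hsyn (A ∩ S) inter_subset_right
      (inter_mem hA (self_mem_of_mem_zeroPlus hp)) ε hε
    obtain ⟨t, htF, ht⟩ := (Ultrafilter.finite_biUnion_mem_iff F.finite_toSet).1
      (mem_of_superset (hr δ hδ) fun x hx =>
        let ⟨t, htF, ht⟩ := hcov x hx; mem_biUnion htF ht)
    refine ⟨t, hFε htF, ?_⟩
    rw [ultrafilter_mem_add_iff]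
    refine mem_of_superset ht fun x hx => mem_of_superset hx.2 fun z hz => ?_
    show t + (x + z) ∈ A
    rw [← add_assoc]
    exact hz.2.1
  exact ⟨q, hq, by rw [ultrafilter_add_assoc, hqp]⟩

end ZeroPlus

/-- characterizations of members of the smallest ideal of `0⁺(S)`. -/
theorem mem_smallestIdeal_zeroPlus_iff (S : Set ℝ) (hS : DenseSubsemigroupPos S)
    (p : Ultrafilter ℝ) (hp : p ∈ zeroPlus S) :
    (p ∈ smallestIdeal (zeroPlus S) ↔
      ∀ A : Set ℝ, A ⊆ S → A ∈ p →
        SyndeticNearZero S {x | x ∈ S ∧ {y | y ∈ S ∧ x + y ∈ A} ∈ p}) ∧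
    (p ∈ smallestIdeal (zeroPlus S) ↔
      ∀ r ∈ zeroPlus S, ∃ q ∈ zeroPlus S, p = q + r + p) := by
  have hT : ∀ a ∈ zeroPlus S, ∀ b ∈ zeroPlus S, a + b ∈ zeroPlus S :=
    fun a ha b hb => add_mem_zeroPlus hS.2.1 ha hb
  have hca : (∀ r ∈ zeroPlus S, ∃ q ∈ zeroPlus S, p = q + r + p) →
      p ∈ smallestIdeal (zeroPlus S) :=
    mem_smallestIdeal_of_forall_exists_eq_add_add hT isClosed_zeroPlus
      (zeroPlus_nonempty hS.2.2) hp
  refine ⟨⟨fun ha A _ hA => syndeticNearZero_of_mem_smallestIdeal hS ha hA,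
    fun hb => hca fun r hr => exists_eq_add_add_of_forall_syndeticNearZero hp hb hr⟩,
    ⟨fun ha r hr => exists_eq_add_add_of_mem_smallestIdeal hT ha hr, hca⟩⟩
end

section
/- If A ⊆ S is piecewise syndetic near zero and A = A_1 ∪ … ∪ A_n is a finite cover of A by subsets of S, then there exists i ∈ {1,…,n} such that A_i is piecewise syndetic near zero; that is, piecewise syndeticity near zero is partition regular. -/
open Set Filter

attribute [local instance] Ultrafilter.add

/-
Proof idea: if `B ∪ C` is piecewise syndetic near zero but `C` is not, take a small finite `G`
with `X = ⋃_{t ∈ G} (-t + (B ∪ C))` thick. The analogous union `Z` for `C` is not thick, so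
there is a finite set `F` of small shifts such that for every small `y` some `t + y` (`t ∈ F`)
leaves `Z`. Points of `X` outside `Z` lie in the union for `B`, so applying the thickness of `X`
to `F + F'` shows that `⋃_{s ∈ F + G} (-s + B)` is thick. Induction on the number of pieces
finishes, since the empty set is not piecewise syndetic near zero.
-/
open scoped Pointwise

namespace PiecewiseSyndeticNearZero

variable {S : Set ℝ}

/-- `⋃_{t ∈ F} (-t + A)`, with `-t + A` taken inside `S`. -/
def negAddUnion (S : Set ℝ) (F : Finset ℝ) (A : Set ℝ) : Set ℝ :=
  {y | y ∈ S ∧ ∃ t ∈ F, t + y ∈ A}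

theorem negAddUnion_union (F : Finset ℝ) (B C : Set ℝ) :
    negAddUnion S F (B ∪ C) = negAddUnion S F B ∪ negAddUnion S F C := by
  ext y
  simp only [negAddUnion, mem_union, mem_ofPred_eq]
  grind

theorem negAddUnion_negAddUnion_subset (F G : Finset ℝ) (B : Set ℝ) :
    negAddUnion S F (negAddUnion S G B) ⊆ negAddUnion S (F + G) B := by
  rintro y ⟨hyS, t, ht, -, g, hg, hB⟩
  refine ⟨hyS, t + g, Finset.add_mem_add ht hg, ?_⟩
  rwa [add_comm t g, add_assoc]

theorem coe_add_subset_Ioo_inter (hadd : ∀ x ∈ S, ∀ y ∈ S, x + y ∈ S) {F G : Finset ℝ}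
    {a b c : ℝ} (hF : ↑F ⊆ Ioo 0 a ∩ S) (hG : ↑G ⊆ Ioo 0 b ∩ S) (habc : a + b ≤ c) :
    ↑(F + G) ⊆ Ioo 0 c ∩ S := by
  intro s hs
  obtain ⟨x, hx, t, ht, rfl⟩ := Finset.mem_add.1 hs
  obtain ⟨⟨hx0, hxa⟩, hxS⟩ := hF hx
  obtain ⟨⟨ht0, htb⟩, htS⟩ := hG ht
  exact ⟨⟨by linarith, by linarith⟩, hadd x hxS t htS⟩

theorem _root_.ThickNearZero.mono {X Y : Set ℝ} (hX : ThickNearZero S X) (hXY : X ⊆ Y) :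
    ThickNearZero S Y := by
  obtain ⟨ε, hε, hX⟩ := hX
  refine ⟨ε, hε, fun F hF hFS δ hδ => ?_⟩
  obtain ⟨y, hy, hFy⟩ := hX F hF hFS δ hδ
  exact ⟨y, hy, fun x hx => hXY (hFy x hx)⟩

theorem _root_.ThickNearZero.piecewiseSyndeticNearZero_of_subset_union
    (hadd : ∀ x ∈ S, ∀ y ∈ S, x + y ∈ S) {X Y Z : Set ℝ} (hX : ThickNearZero S X)
    (hXYZ : X ⊆ Y ∪ Z) (hZ : ¬ThickNearZero S Z) : PiecewiseSyndeticNearZero S Y := by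
  obtain ⟨εX, hεX, hX⟩ := hX
  intro δ hδ
  unfold ThickNearZero at hZ
  push Not at hZ
  obtain ⟨F, hF, hFS, δ₀, hδ₀, hFZ⟩ := hZ (min δ (εX / 2)) (by positivity)
  refine ⟨F, hF, hFS.trans (inter_subset_inter_left _ (Ioo_subset_Ioo_right (min_le_left _ _))),
    min (εX / 2) (δ₀ / 2), by positivity, fun F' hF' hF'S δ' hδ' => ?_⟩
  have hsum : min δ (εX / 2) + min (εX / 2) (δ₀ / 2) ≤ εX := by
    linarith [min_le_right δ (εX / 2), min_le_left (εX / 2) (δ₀ / 2)]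
  have hFF'S : ↑(F + F') ⊆ Ioo 0 εX ∩ S := coe_add_subset_Ioo_inter hadd hFS hF'S hsum
  obtain ⟨y, ⟨⟨hy0, hyδ⟩, hyS⟩, hFF'y⟩ :=
    hX (F + F') (hF.add hF') hFF'S (min δ' (δ₀ / 2)) (by positivity)
  refine ⟨y, ⟨⟨hy0, hyδ.trans_le (min_le_left _ _)⟩, hyS⟩, fun x hx => ?_⟩
  obtain ⟨⟨hx0, hxε⟩, hxS⟩ := hF'S hx
  have hxy : x + y ∈ Ioo 0 δ₀ ∩ S :=
    ⟨⟨by positivity, by linarith [min_le_right (εX / 2) (δ₀ / 2), min_le_right δ' (δ₀ / 2)]⟩,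
      hadd x hxS y hyS⟩
  obtain ⟨t, ht, htZ⟩ := hFZ (x + y) hxy
  have htX : t + (x + y) ∈ X := by
    rw [← add_assoc]
    exact hFF'y _ (Finset.add_mem_add ht hx)
  exact ⟨hxy.2, t, ht, (hXYZ htX).resolve_right htZ⟩

theorem of_forall_negAddUnion (hadd : ∀ x ∈ S, ∀ y ∈ S, x + y ∈ S) {B : Set ℝ}
    (h : ∀ δ > 0, ∃ G : Finset ℝ, G.Nonempty ∧ ↑G ⊆ Ioo 0 δ ∩ S ∧
      PiecewiseSyndeticNearZero S (negAddUnion S G B)) :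
    PiecewiseSyndeticNearZero S B := by
  intro δ hδ
  obtain ⟨G, hG, hGS, hGB⟩ := h (δ / 2) (by positivity)
  obtain ⟨F, hF, hFS, hthick⟩ := hGB (δ / 2) (by positivity)
  exact ⟨F + G, hF.add hG, coe_add_subset_Ioo_inter hadd hFS hGS (add_halves δ).le,
    hthick.mono (negAddUnion_negAddUnion_subset F G B)⟩

theorem nonempty {A : Set ℝ} (h : PiecewiseSyndeticNearZero S A) : A.Nonempty := by
  obtain ⟨_, -, -, ε, hε, hthick⟩ := h 1 one_pos
  obtain ⟨F, ⟨x, hx⟩, hFS, -⟩ := h ε hε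
  obtain ⟨y, -, hFy⟩ := hthick F ⟨x, hx⟩ hFS 1 one_pos
  obtain ⟨-, t, -, htA⟩ := hFy x hx
  exact ⟨_, htA⟩

theorem union (hadd : ∀ x ∈ S, ∀ y ∈ S, x + y ∈ S) {B C : Set ℝ}
    (h : PiecewiseSyndeticNearZero S (B ∪ C)) :
    PiecewiseSyndeticNearZero S B ∨ PiecewiseSyndeticNearZero S C := by
  refine or_iff_not_imp_right.2 fun hC => ?_
  unfold PiecewiseSyndeticNearZero at hC
  push Not at hC
  obtain ⟨δC, hδC, hC⟩ := hC
  refine of_forall_negAddUnion hadd fun δ hδ => ?_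
  obtain ⟨G, hG, hGS, hthick⟩ := h (min δ δC) (by positivity)
  refine ⟨G, hG, hGS.trans (inter_subset_inter_left _ (Ioo_subset_Ioo_right (min_le_left _ _))),
    ThickNearZero.piecewiseSyndeticNearZero_of_subset_union hadd hthick
      (negAddUnion_union G B C).subset (hC G hG ?_)⟩
  exact hGS.trans (inter_subset_inter_left _ (Ioo_subset_Ioo_right (min_le_right _ _)))

theorem exists_of_iUnion (hadd : ∀ x ∈ S, ∀ y ∈ S, x + y ∈ S) {ι : Type*} [Finite ι]
    {B : ι → Set ℝ} (h : PiecewiseSyndeticNearZero S (⋃ i, B i)) :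
    ∃ i, PiecewiseSyndeticNearZero S (B i) := by
  classical
  cases nonempty_fintype ι
  suffices ∀ s : Finset ι, PiecewiseSyndeticNearZero S (⋃ i ∈ s, B i) →
      ∃ i, PiecewiseSyndeticNearZero S (B i) from this Finset.univ (by simpa using h)
  intro s
  induction s using Finset.induction_on with
  | empty => exact fun h => absurd h.nonempty (by simp)
  | insert a s _ ih =>
    intro h
    rw [Finset.set_biUnion_insert] at h
    exact (h.union hadd).elim (fun ha => ⟨a, ha⟩) ih

end PiecewiseSyndeticNearZero

theorem piecewiseSyndeticNearZero_partition_regular_general (S : Set ℝ)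
    (hS : DenseSubsemigroupPos S) (A : Set ℝ)
    (hpws : PiecewiseSyndeticNearZero S A) (n : ℕ) (𝒜 : Fin n → Set ℝ)
    (hcover : A = ⋃ i, 𝒜 i) :
    ∃ i, PiecewiseSyndeticNearZero S (𝒜 i) := by
  subst hcover
  exact hpws.exists_of_iUnion hS.2.1

/-- piecewise syndeticity near zero is partition regular. -/
theorem piecewiseSyndeticNearZero_partition_regular (S : Set ℝ)
    (hS : DenseSubsemigroupPos S) (A : Set ℝ) (hA : A ⊆ S)
    (hpws : PiecewiseSyndeticNearZero S A) (n : ℕ) (𝒜 : Fin n → Set ℝ)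
    (h𝒜 : ∀ i, 𝒜 i ⊆ S) (hcover : A = ⋃ i, 𝒜 i) :
    ∃ i, PiecewiseSyndeticNearZero S (𝒜 i) :=
  piecewiseSyndeticNearZero_partition_regular_general S hS A hpws n 𝒜 hcover
end

section
/- If A ⊆ S is a J-set near zero, then for every m ∈ ℕ, every finite nonempty F ⊆ T_0 and every δ > 0 there exist a ∈ S∩(0,δ) and a finite nonempty H ⊆ ℕ with min H > m such that a + Σ_{t∈H} f(t) ∈ A for every f ∈ F. -/
open Set Filter

attribute [local instance] Ultrafilter.add

/-! A positive sequence with infimum `0` never attains it, so each of its tails still has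
infimum `0`. Hence shifting every `f ∈ F` by `m + 1` stays inside `T0 S`; the `J`-set property
for the shifted sequences gives `a` and `H`, and `H + (m + 1)` works for `F`. -/

theorem isGLB_range_comp_succ {α : Type*} [LinearOrder α] {f : ℕ → α} {x : α}
    (h : IsGLB (range f) x) (hx : x < f 0) : IsGLB (range (f ∘ Nat.succ)) x := by
  refine ⟨fun _ ⟨n, hn⟩ => h.1 ⟨n + 1, hn⟩, fun b hb => ?_⟩
  have hmin : min (f 0) b ∈ lowerBounds (range f) := by
    rw [← Nat.range_of_succ, lowerBounds_union, lowerBounds_singleton]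
    exact ⟨min_le_left _ _, fun y hy => (min_le_right _ _).trans (hb hy)⟩
  exact (min_le_iff.mp (h.2 hmin)).resolve_left hx.not_ge

theorem isGLB_range_add_of_lt {α : Type*} [LinearOrder α] {f : ℕ → α} {x : α}
    (h : IsGLB (range f) x) (hx : ∀ n, x < f n) (k : ℕ) :
    IsGLB (range fun n => f (n + k)) x := by
  induction k with
  | zero => simpa using h
  | succ k ih =>
    have := isGLB_range_comp_succ ih (by simpa using hx k)
    simpa [Function.comp_def, add_assoc, add_comm 1 k] using this

theorem T0.comp_add_right {S : Set ℝ} (hS : ∀ x ∈ S, 0 < x) {f : ℕ → ℝ} (hf : f ∈ T0 S)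
    (k : ℕ) : (fun n => f (n + k)) ∈ T0 S :=
  ⟨fun n => hf.1 (n + k), isGLB_range_add_of_lt hf.2 (fun n => hS _ (hf.1 n)) k⟩

theorem jSetNearZero_min_gt_general (S : Set ℝ) (hS : DenseSubsemigroupPos S) (A : Set ℝ)
    (hJ : JSetNearZero S A) (m : ℕ) (F : Finset (ℕ → ℝ))
    (hF : F.Nonempty) (hFT : ↑F ⊆ T0 S) (δ : ℝ) (hδ : 0 < δ) :
    ∃ a ∈ S ∩ Set.Ioo (0 : ℝ) δ, ∃ H : Finset ℕ, H.Nonempty ∧ (∀ t ∈ H, m < t) ∧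
      ∀ f ∈ F, a + ∑ t ∈ H, f t ∈ A := by
  classical
  let shift : (ℕ → ℝ) → ℕ → ℝ := fun f n => f (n + (m + 1))
  have hshiftT : ↑(F.image shift) ⊆ T0 S := by
    intro g hg
    obtain ⟨f, hf, rfl⟩ := Finset.mem_image.mp hg
    exact T0.comp_add_right hS.1 (hFT hf) (m + 1)
  obtain ⟨a, ha, H, hH, hsum⟩ := hJ _ (hF.image shift) hshiftT δ hδ
  refine ⟨a, ha, H.map (addRightEmbedding (m + 1)), hH.map, ?_, fun f hf => ?_⟩
  · simp only [Finset.mem_map, addRightEmbedding_apply]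
    rintro _ ⟨t, -, rfl⟩
    omega
  · simpa [Finset.sum_map] using hsum (shift f) (Finset.mem_image_of_mem shift hf)

/-- in the definition of a `J`-set near zero one may moreover demand
    `min H > m`. -/
theorem jSetNearZero_min_gt (S : Set ℝ) (hS : DenseSubsemigroupPos S) (A : Set ℝ)
    (hA : A ⊆ S) (hJ : JSetNearZero S A) (m : ℕ) (F : Finset (ℕ → ℝ))
    (hF : F.Nonempty) (hFT : ↑F ⊆ T0 S) (δ : ℝ) (hδ : 0 < δ) :
    ∃ a ∈ S ∩ Set.Ioo (0 : ℝ) δ, ∃ H : Finset ℕ, H.Nonempty ∧ (∀ t ∈ H, m < t) ∧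
      ∀ f ∈ F, a + ∑ t ∈ H, f t ∈ A :=
  jSetNearZero_min_gt_general S hS A hJ m F hF hFT δ hδ
end

section
/- Let (D,≤) be a directed set and let (T_i)_{i∈D} be a family of nonempty subsets of S such that T_j ⊆ T_i whenever i ≤ j, 0 lies in the closure of each T_i in ℝ, and for each i ∈ D and each x ∈ T_i there exists j ∈ D with x + T_j ⊆ T_i. Then Q = ⋂_{i∈D} cl(T_i) is a nonempty compact subset of βS_d that is closed under the semigroup operation: p+q ∈ Q for all p, q ∈ Q. -/
open Set Filter

attribute [local instance] Ultrafilter.add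

namespace Ultrafilter

variable {ι M : Type*}

theorem nonempty_iInter_setOf_mem [Nonempty ι] {T : ι → Set M} (hdir : Directed (· ⊇ ·) T)
    (hne : ∀ i, (T i).Nonempty) : (⋂ i, {p : Ultrafilter M | T i ∈ p}).Nonempty := by
  have : (⨅ i, 𝓟 (T i)).NeBot :=
    iInf_neBot_of_directed' (fun i j => (hdir i j).imp fun _ hk => ⟨principal_mono.2 hk.1,
      principal_mono.2 hk.2⟩) fun i => principal_neBot_iff.2 (hne i)
  exact ⟨Ultrafilter.of (⨅ i, 𝓟 (T i)),
    mem_iInter.2 fun i => Ultrafilter.of_le _ (mem_iInf_of_mem i (mem_principal_self _))⟩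

theorem mem_add_of_forall_exists_add_mem [Add M] {T : ι → Set M}
    (hT : ∀ i, ∀ x ∈ T i, ∃ j, ∀ y ∈ T j, x + y ∈ T i) {p q : Ultrafilter M}
    (hp : ∀ i, T i ∈ p) (hq : ∀ i, T i ∈ q) (i : ι) : T i ∈ p + q :=
  (eventually_add p q (· ∈ T i)).2 <| mem_of_superset (hp i) fun x hx =>
    let ⟨j, hj⟩ := hT i x hx
    mem_of_superset (hq j) hj

end Ultrafilter

theorem inter_closure_is_compact_subsemigroup_general (S : Set ℝ)
    (D : Type*) [Preorder D] [Nonempty D]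
    (hdir : ∀ i j : D, ∃ k, i ≤ k ∧ j ≤ k) (T : D → Set ℝ)
    (hTS : ∀ i, T i ⊆ S) (hTne : ∀ i, (T i).Nonempty)
    (hTanti : ∀ i j : D, i ≤ j → T j ⊆ T i)
    (hTadd : ∀ i, ∀ x ∈ T i, ∃ j, ∀ y ∈ T j, x + y ∈ T i) :
    (⋂ i, {p : Ultrafilter ℝ | T i ∈ p}).Nonempty ∧
    IsCompact (⋂ i, {p : Ultrafilter ℝ | T i ∈ p}) ∧
    (∀ p ∈ ⋂ i, {p : Ultrafilter ℝ | T i ∈ p}, S ∈ p) ∧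
    ∀ p ∈ ⋂ i, {p : Ultrafilter ℝ | T i ∈ p},
      ∀ q ∈ ⋂ i, {p : Ultrafilter ℝ | T i ∈ p},
        p + q ∈ ⋂ i, {p : Ultrafilter ℝ | T i ∈ p} := by
  have hTdir : Directed (· ⊇ ·) T := fun i j =>
    (hdir i j).imp fun k hk => ⟨hTanti i k hk.1, hTanti j k hk.2⟩
  refine ⟨Ultrafilter.nonempty_iInter_setOf_mem hTdir hTne,
    (isClosed_iInter fun i => ultrafilter_isClosed_basic (T i)).isCompact, ?_, ?_⟩
  · intro p hp
    obtain ⟨i⟩ := ‹Nonempty D›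
    exact mem_of_superset (mem_iInter.1 hp i) (hTS i)
  · intro p hp q hq
    exact mem_iInter.2 <|
      Ultrafilter.mem_add_of_forall_exists_add_mem hTadd (mem_iInter.1 hp) (mem_iInter.1 hq)

/-- `Q = ⋂ᵢ cl(Tᵢ)` is a nonempty compact subsemigroup of `βS_d`. -/
theorem inter_closure_is_compact_subsemigroup (S : Set ℝ)
    (hS : DenseSubsemigroupPos S) (D : Type*) [Preorder D] [Nonempty D]
    (hdir : ∀ i j : D, ∃ k, i ≤ k ∧ j ≤ k) (T : D → Set ℝ)
    (hTS : ∀ i, T i ⊆ S) (hTne : ∀ i, (T i).Nonempty)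
    (hTanti : ∀ i j : D, i ≤ j → T j ⊆ T i)
    (hT0 : ∀ i, (0 : ℝ) ∈ closure (T i))
    (hTadd : ∀ i, ∀ x ∈ T i, ∃ j, ∀ y ∈ T j, x + y ∈ T i) :
    (⋂ i, {p : Ultrafilter ℝ | T i ∈ p}).Nonempty ∧
    IsCompact (⋂ i, {p : Ultrafilter ℝ | T i ∈ p}) ∧
    (∀ p ∈ ⋂ i, {p : Ultrafilter ℝ | T i ∈ p}, S ∈ p) ∧
    ∀ p ∈ ⋂ i, {p : Ultrafilter ℝ | T i ∈ p},
      ∀ q ∈ ⋂ i, {p : Ultrafilter ℝ | T i ∈ p},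
        p + q ∈ ⋂ i, {p : Ultrafilter ℝ | T i ∈ p} :=
  inter_closure_is_compact_subsemigroup_general S D hdir T hTS hTne hTanti hTadd
end

section
/- 0⁺(S) ∩ K(βS_d) = ∅; that is, no ultrafilter in 0⁺(S) belongs to the smallest two-sided ideal of βS_d. -/
open Set Filter

attribute [local instance] Ultrafilter.add
attribute [local instance] Ultrafilter.addSemigroup

/-- `0⁺(S)` is disjoint from the smallest ideal of `βS_d`. -/
theorem zeroPlus_inter_smallestIdeal_beta_eq_empty (S : Set ℝ)
    (hS : DenseSubsemigroupPos S) :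
    zeroPlus S ∩ smallestIdeal {q : Ultrafilter ℝ | S ∈ q} = ∅ := by
  

  classical
  obtain ⟨hpos, hadd, hdense⟩ := hS
  -- S is nonempty
  have hSne : S.Nonempty := by
    by_contra h
    rw [Set.not_nonempty_iff_eq_empty] at h
    have : (1 : ℝ) ∈ closure S := hdense (by norm_num)
    simp [h] at this
  obtain ⟨s, hs⟩ := hSne
  have hs0 : 0 < s := hpos s hs
  set T : Set (Ultrafilter ℝ) := {q : Ultrafilter ℝ | S ∈ q} with hT
  -- T is closed under +
  have hTadd : ∀ w u : Ultrafilter ℝ, S ∈ w → S ∈ u → S ∈ w + u := by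
    intro w u hw hu
    have : ∀ᶠ a in (w : Filter ℝ), ∀ᶠ b in (u : Filter ℝ), a + b ∈ S := by
      filter_upwards [hw] with a ha
      filter_upwards [hu] with b hb
      exact hadd a ha b hb
    exact this
  rw [Set.eq_empty_iff_forall_notMem]
  rintro p ⟨hp0, hpK⟩
  obtain ⟨L, hLmin, hpL⟩ := hpK
  obtain ⟨⟨hLne, hLT, hLideal⟩, hmin⟩ := hLmin
  -- S ∈ p
  have hSp : S ∈ p := by
    have := hp0 1 (by norm_num)
    exact p.toFilter.mem_of_superset this (Set.inter_subset_right)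
  -- the principal ultrafilter at s
  set q : Ultrafilter ℝ := (pure s : Ultrafilter ℝ) with hq
  have hqT : q ∈ T := by simpa [hq, hT] using hs
  have hqpL : q + p ∈ L := hLideal q hqT p hpL
  -- L' = T + (q + p)
  set L' : Set (Ultrafilter ℝ) := (fun w => w + (q + p)) '' T with hL'
  have hL'sub : L' ⊆ L := by
    rintro _ ⟨w, hw, rfl⟩
    exact hLideal w hw (q + p) hqpL
  have hL'ideal : IsLeftIdealIn T L' := by
    refine ⟨⟨q + (q + p), ⟨q, hqT, rfl⟩⟩, hL'sub.trans hLT, ?_⟩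
    rintro w hw _ ⟨u, hu, rfl⟩
    exact ⟨w + u, hTadd w u hw hu, by dsimp only; exact add_assoc w u (q + p)⟩
  have hL'eq : L' = L := hmin L' hL'ideal hL'sub
  -- p = r + (q + p) for some r ∈ T
  have : p ∈ L' := hL'eq ▸ hpL
  obtain ⟨r, hrT, hreq⟩ := this
  -- Ioi s ∈ q + p
  have h1 : Ioi s ∈ q + p := by
    have : ∀ᶠ a in (q : Filter ℝ), ∀ᶠ b in (p : Filter ℝ), a + b ∈ Ioi s := by
      rw [hq]
      simp only [Ultrafilter.coe_pure, Filter.eventually_pure]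
      filter_upwards [hp0 1 (by norm_num)] with b hb
      have : 0 < b := hb.1.1
      simpa using this
    exact this
  -- Ioi s ∈ r + (q + p)
  have h2 : Ioi s ∈ r + (q + p) := by
    have : ∀ᶠ a in (r : Filter ℝ), ∀ᶠ b in ((q + p : Ultrafilter ℝ) : Filter ℝ),
        a + b ∈ Ioi s := by
      filter_upwards [hrT] with a ha
      filter_upwards [h1] with b hb
      have ha0 : 0 < a := hpos a ha
      have : s < b := hb
      simp only [Set.mem_Ioi]
      linarith
    exact this
  -- hence Ioi s ∈ p, contradicting Ioo 0 s ∩ S ∈ p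
  dsimp only at hreq
  rw [hreq] at h2
  have h3 : Ioo (0 : ℝ) s ∩ S ∈ p := hp0 s hs0
  have h4 : (Ioi s ∩ (Ioo (0 : ℝ) s ∩ S)) ∈ p := Filter.inter_mem h2 h3
  have h5 : Ioi s ∩ (Ioo (0 : ℝ) s ∩ S) = ∅ := by
    ext x
    simp only [Set.mem_inter_iff, Set.mem_Ioi, Set.mem_Ioo, Set.mem_empty_iff_false,
      iff_false, not_and]
    intro hx hx2
    exact absurd hx2.2 (by linarith)
  rw [h5] at h4
  exact Filter.empty_notMem (p : Filter ℝ) h4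
end
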